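/- arXiv:2311.04110 — 5 statements merged into one kernel-verified Lean document; each statement's English description precedes it below -/
import Mathlib

section
/- For every τ ∈ ℍ, every z ∈ ℂ and every positive integer N, one has the distribution relation θ₀(Nz, Nτ) = ∏_{j=0}^{N−1} θ₀(z + j/N, τ). -/
noncomputable section

open Complex

/-- `e2 w = e^{2πi w}`. -/
def e2 (w : ℂ) : ℂ := Complex.exp (2 * (Real.pi : ℂ) * Complex.I * w)

/-- The theta function `θ₀(z,τ) = ∏_{n ≥ 0} (1 − e^{2πi(nτ+z)})(1 − e^{2πi((n+1)τ−z)})`. -/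
def theta0 (z τ : ℂ) : ℂ :=
  ∏' n : ℕ, (1 - e2 ((n : ℂ) * τ + z)) * (1 - e2 (((n : ℂ) + 1) * τ - z))

/-!
With `ζ = e^{2πi/N}`, the factorisation `1 - y^N = ∏_{j<N} (1 - y ζ^j)` applied to both factors
of the `n`-th term of `θ₀(Nz, Nτ)` splits it into the product of the `n`-th terms of the
`θ₀(z + j/N, τ)`. Since `|e^{2πiτ}| < 1`, each of these `N` infinite products converges, so the
finite product may be taken out of the infinite one.
-/

theorem IsPrimitiveRoot.prod_range_one_sub_mul_pow {R : Type*} [CommRing R] [IsDomain R]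
    {N : ℕ} (hN : 0 < N) {ζ : R} (hζ : IsPrimitiveRoot ζ N) (y : R) :
    ∏ j ∈ Finset.range N, (1 - y * ζ ^ j) = 1 - y ^ N := by
  have : NeZero N := ⟨hN.ne'⟩
  rw [← one_pow N, hζ.pow_sub_pow_eq_prod_sub_mul 1 y hN, one_pow]
  refine Finset.prod_nbij (ζ ^ ·) (fun j _ => ?_) (fun a ha b hb hab => ?_) (fun μ hμ => ?_)
    (fun j _ => by rw [mul_comm])
  · exact (Polynomial.mem_nthRootsFinset hN 1).2 (by rw [← pow_mul', pow_mul, hζ.pow_eq_one,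
      one_pow])
  · exact hζ.pow_inj (Finset.mem_range.1 ha) (Finset.mem_range.1 hb) hab
  · obtain ⟨i, hi, rfl⟩ := hζ.eq_pow_of_pow_eq_one ((Polynomial.mem_nthRootsFinset hN 1).1 hμ)
    exact ⟨i, by simpa using hi, rfl⟩

theorem multipliable_one_sub_mul_pow {R : Type*} [NormedCommRing R] [NormOneClass R]
    [CompleteSpace R] (c : R) {q : R} (hq : ‖q‖ < 1) :
    Multipliable fun n : ℕ => 1 - c * q ^ n := by
  have hsum : Summable fun n : ℕ => ‖-(c * q ^ n)‖ := by
    refine .of_nonneg_of_le (fun _ => norm_nonneg _) (fun n => ?_)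
      ((summable_geometric_of_lt_one (norm_nonneg q) hq).mul_left ‖c‖)
    rw [norm_neg]
    exact (norm_mul_le _ _).trans (by gcongr; exact norm_pow_le q n)
  simpa [sub_eq_add_neg] using multipliable_one_add_of_summable hsum

lemma e2_add (a b : ℂ) : e2 (a + b) = e2 a * e2 b := by
  simp only [e2, mul_add, Complex.exp_add]

lemma e2_sub (a b : ℂ) : e2 (a - b) = e2 a * (e2 b)⁻¹ := by
  simp only [e2, mul_sub, Complex.exp_sub, div_eq_mul_inv]

lemma e2_nat_mul (n : ℕ) (w : ℂ) : e2 (n * w) = e2 w ^ n := by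
  rw [e2, e2, ← Complex.exp_nat_mul]
  ring_nf

lemma norm_e2_lt_one {τ : ℂ} (hτ : 0 < τ.im) : ‖e2 τ‖ < 1 := by
  rw [e2, Complex.norm_exp, Real.exp_lt_one_iff]
  simpa [Complex.mul_re, Complex.mul_im] using mul_pos (mul_pos two_pos Real.pi_pos) hτ

lemma isPrimitiveRoot_e2_one_div {N : ℕ} (hN : N ≠ 0) : IsPrimitiveRoot (e2 (1 / N)) N := by
  simpa only [e2, mul_one_div] using Complex.isPrimitiveRoot_exp N hN

def theta0Factor (z τ : ℂ) (n : ℕ) : ℂ :=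
  (1 - e2 ((n : ℂ) * τ + z)) * (1 - e2 (((n : ℂ) + 1) * τ - z))

lemma theta0_eq_tprod_theta0Factor (z τ : ℂ) : theta0 z τ = ∏' n, theta0Factor z τ n := rfl

lemma multipliable_theta0Factor {τ : ℂ} (hτ : 0 < τ.im) (z : ℂ) :
    Multipliable (theta0Factor z τ) := by
  refine ((multipliable_one_sub_mul_pow (e2 z) (norm_e2_lt_one hτ)).mul
    (multipliable_one_sub_mul_pow (e2 (τ - z)) (norm_e2_lt_one hτ))).congr fun n => ?_
  rw [theta0Factor, add_comm, e2_add, add_mul, one_mul, add_sub_assoc, e2_add, e2_nat_mul]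
  ring

lemma theta0Factor_nat_mul {N : ℕ} (hN : 0 < N) (z τ : ℂ) (n : ℕ) :
    theta0Factor (N * z) (N * τ) n = ∏ j ∈ Finset.range N, theta0Factor (z + j / N) τ n := by
  set ζ := e2 (1 / N)
  have hζ : IsPrimitiveRoot ζ N := isPrimitiveRoot_e2_one_div hN.ne'
  have hshift (j : ℕ) : e2 (j / N) = ζ ^ j := by rw [← e2_nat_mul, mul_one_div]
  calc theta0Factor (N * z) (N * τ) n
      = (1 - e2 (n * τ + z) ^ N) * (1 - e2 ((n + 1) * τ - z) ^ N) := by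
        simp only [theta0Factor, ← e2_nat_mul]
        ring_nf
    _ = ∏ j ∈ Finset.range N,
          (1 - e2 (n * τ + z) * ζ ^ j) * (1 - e2 ((n + 1) * τ - z) * ζ⁻¹ ^ j) := by
        rw [Finset.prod_mul_distrib, hζ.prod_range_one_sub_mul_pow hN,
          hζ.inv.prod_range_one_sub_mul_pow hN]
    _ = ∏ j ∈ Finset.range N, theta0Factor (z + j / N) τ n := by
        refine Finset.prod_congr rfl fun j _ => ?_
        rw [theta0Factor, ← add_assoc, ← sub_sub, e2_add (_ + z), e2_sub (_ - z), hshift, inv_pow]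

/-- Distribution relation: for `τ ∈ ℍ`, `z ∈ ℂ` and `N ≥ 1`,
`θ₀(Nz, Nτ) = ∏_{j=0}^{N−1} θ₀(z + j/N, τ)`. -/
theorem theta0_distribution (τ : ℂ) (hτ : 0 < τ.im) (z : ℂ) (N : ℕ) (hN : 0 < N) :
    theta0 ((N : ℂ) * z) ((N : ℂ) * τ) =
      ∏ j ∈ Finset.range N, theta0 (z + (j : ℂ) / (N : ℂ)) τ := by
  simp only [theta0_eq_tprod_theta0Factor]
  calc ∏' n, theta0Factor (N * z) (N * τ) n
      = ∏' n, ∏ j ∈ Finset.range N, theta0Factor (z + j / N) τ n :=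
        tprod_congr (theta0Factor_nat_mul hN z τ)
    _ = ∏ j ∈ Finset.range N, ∏' n, theta0Factor (z + j / N) τ n :=
        Multipliable.tprod_finsetProd fun j _ => multipliable_theta0Factor hτ _
end
end

section
/- Let λ ∈ L be admissible. Then there exists a unique primitive element a ∈ Λ = Hom_ℤ(L,ℤ) such that (i) the element det(a, εa, ·) of Λ^∨ = L is a nonzero multiple of λ, where εa denotes the dual action of multiplication by ε, and (ii) x ∈ U_a, where x = σ_ℂ|_L ∈ Hom_ℤ(L,ℂ). -/
noncomputable section

open scoped NumberField nonZeroDivisors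

variable (K : Type) [Field K] [NumberField K]

/-- The fractional ideal `L = 𝔣𝔟⁻¹`. -/
def Lfrac (𝔣 𝔟 : Ideal (𝓞 K)) : FractionalIdeal (𝓞 K)⁰ K :=
  (𝔣 : FractionalIdeal (𝓞 K)⁰ K) * (𝔟 : FractionalIdeal (𝓞 K)⁰ K)⁻¹

/-- The fractional ideal `𝔞⁻¹L = 𝔞⁻¹𝔣𝔟⁻¹`. -/
def aInvL (𝔣 𝔟 𝔞 : Ideal (𝓞 K)) : FractionalIdeal (𝓞 K)⁰ K :=
  (𝔞 : FractionalIdeal (𝓞 K)⁰ K)⁻¹ * Lfrac K 𝔣 𝔟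

/-- `λ ∈ L` is admissible if `λ ∈ N(𝔞)𝔞⁻¹L`, `λ ≡ q mod qL` and `λ ∉ N(𝔞)L`. -/
def Admissible (𝔣 𝔟 𝔞 : Ideal (𝓞 K)) (q : ℕ) (lam : K) : Prop :=
  lam ∈ Lfrac K 𝔣 𝔟 ∧
  (Ideal.absNorm 𝔞 : K)⁻¹ * lam ∈ aInvL K 𝔣 𝔟 𝔞 ∧
  (q : K)⁻¹ * (lam - (q : K)) ∈ Lfrac K 𝔣 𝔟 ∧
  (Ideal.absNorm 𝔞 : K)⁻¹ * lam ∉ Lfrac K 𝔣 𝔟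

/-- The determinant attached to the orientation of `K` induced by `(σ_ℝ, σ_ℂ)`:
`det3(u,v,w)` is the determinant of the matrix of coordinates of `u, v, w` under
`K ⊗ ℝ ≅ ℝ × ℂ = ℝ³`. -/
def det3 (σR : K →+* ℝ) (σC : K →+* ℂ) (u v w : K) : ℝ :=
  Matrix.det !![σR u, (σC u).re, (σC u).im;
                σR v, (σC v).re, (σC v).im;
                σR w, (σC w).re, (σC w).im]

/-- A ℤ-valued functional on `K` is identified with an element of `Λ = Hom_ℤ(L,ℤ)` when it
takes integer values on `L`; it is primitive when the induced map `L → ℤ` is onto. -/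
def IsPrimitiveOn (L : FractionalIdeal (𝓞 K)⁰ K) (a : K →ₗ[ℚ] ℚ) : Prop :=
  (∀ v : K, v ∈ L → ∃ n : ℤ, a v = (n : ℚ)) ∧ (∃ v : K, v ∈ L ∧ a v = 1)

/-- `z ∈ U_a`: there is an oriented basis `(λ,μ)` of the plane `H(a) = ker a` (oriented
with respect to the orientation `det3` of `K`) with `Im(z(λ) conj(z(μ))) > 0`. -/
def memU (σR : K →+* ℝ) (σC : K →+* ℂ) (a : K →ₗ[ℚ] ℚ) (z : K →ₗ[ℚ] ℂ) : Prop :=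
  ∃ lam mu : K, a lam = 0 ∧ a mu = 0 ∧ LinearIndependent ℚ ![lam, mu] ∧
    (∀ δ : K, 0 < a δ → 0 < det3 K σR σC lam mu δ) ∧
    0 < (z lam * (starRingEnd ℂ) (z mu)).im

/-- The complex embedding `σ_ℂ` restricted to `L`, viewed as the element
`x ∈ Hom_ℤ(L, ℂ)` (equivalently, as a ℚ-linear map `K → ℂ`). -/
def xlin (σC : K →+* ℂ) : K →ₗ[ℚ] ℂ :=
  σC.toAddMonoidHom.toRatLinearMap

/-- The dual action of a unit `ε`: `(εa)(v) = a(ε⁻¹ v)`. -/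
def epsDual (ε : (𝓞 K)ˣ) (a : K →ₗ[ℚ] ℚ) : K →ₗ[ℚ] ℚ :=
  a ∘ₗ LinearMap.mulLeft ℚ (algebraMap (𝓞 K) K ((ε⁻¹ : (𝓞 K)ˣ) : 𝓞 K))

open scoped IntermediateField

/-! The unit `ε` is irrational (a rational unit is `±1`, but `0 < σ_ℝ(ε) < 1`), so in the cubic
field `K` it has degree `3` and `(ε⁻¹λ, λ, ελ)` is a `ℚ`-basis of `K`. Condition (i) says exactly
that `a` kills `ε⁻¹λ` and `λ`, i.e. `a` is a multiple `s` of the last coordinate functional;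
primitivity determines `s` up to sign. For such `a` the plane `ker a` is spanned by `ε⁻¹λ, λ`, and
`x ∈ U_a` turns out to mean `0 < s · det3(ε⁻¹λ, λ, ελ) · Im(σ_ℂ(ε⁻¹λ) conj σ_ℂ(λ))`; both factors
besides `s` are nonzero (the first by the nonvanishing of the discriminant, the second because
`σ_ℂ(ε⁻¹) ∉ ℝ`), so exactly one sign works. -/

section FieldTheory

variable {F E : Type*} [Field F] [Field E] [Algebra F E]

theorem minpoly_natDegree_eq_finrank_of_prime (hp : (Module.finrank F E).Prime) {x : E}
    (hx : x ∉ (algebraMap F E).range) : (minpoly F x).natDegree = Module.finrank F E := by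
  have : FiniteDimensional F E := Module.finite_of_finrank_pos hp.pos
  rcases (Nat.dvd_prime hp).mp (minpoly.degree_dvd (IsIntegral.of_finite F x)) with h | h
  · exact absurd (minpoly.natDegree_eq_one_iff.mp h) hx
  · exact h

theorem algHom_ext_of_finrank_prime {A : Type*} [Ring A] [Algebra F A]
    (hp : (Module.finrank F E).Prime) {x : E} (hx : x ∉ (algebraMap F E).range)
    {φ ψ : E →ₐ[F] A} (h : φ x = ψ x) : φ = ψ := by
  have : FiniteDimensional F E := Module.finite_of_finrank_pos hp.pos
  have htop : F⟮x⟯ = ⊤ := (Field.primitive_element_iff_minpoly_natDegree_eq F x).mpr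
    (minpoly_natDegree_eq_finrank_of_prime hp hx)
  refine AlgHom.ext_of_adjoin_eq_top
    ((IntermediateField.adjoin_simple_eq_top_iff_of_isAlgebraic
      (Algebra.IsAlgebraic.isAlgebraic x)).mp htop) ?_
  rintro _ rfl
  exact h

theorem exists_basis_mul_pow_of_finrank_prime {n : ℕ} (hn : Module.finrank F E = n)
    (hp : n.Prime) {x : E} (hx : x ∉ (algebraMap F E).range) {y : E} (hy : y ≠ 0) :
    ∃ B : Module.Basis (Fin n) F E, ∀ i, B i = y * x ^ (i : ℕ) := by
  subst hn
  have hpow := (linearIndependent_pow (K := F) x).comp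
    (finCongr (minpoly_natDegree_eq_finrank_of_prime hp hx).symm) (finCongr _).injective
  have hli := hpow.map' (LinearMap.mulLeft F y)
    (LinearMap.ker_eq_bot.mpr (mul_right_injective₀ hy))
  have : Nonempty (Fin (Module.finrank F E)) := ⟨⟨0, hp.pos⟩⟩
  exact ⟨basisOfLinearIndependentOfCardEqFinrank hli (Fintype.card_fin _), fun i => by simp⟩

theorem exists_basis_inv_mul_mul_of_finrank_eq_three (hn : Module.finrank F E = 3) {x : E}
    (hx : x ∉ (algebraMap F E).range) {y : E} (hy : y ≠ 0) :
    ∃ B : Module.Basis (Fin 3) F E, B 0 = x⁻¹ * y ∧ B 1 = y ∧ B 2 = x * y := by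
  have hx0 : x ≠ 0 := fun h => hx ⟨0, by simp [h]⟩
  obtain ⟨B, hB⟩ := exists_basis_mul_pow_of_finrank_prime hn Nat.prime_three hx
    (mul_ne_zero (inv_ne_zero hx0) hy)
  refine ⟨B, by simp [hB], ?_, ?_⟩ <;> simp [hB] <;> field_simp

end FieldTheory

theorem LinearMap.linearIndependent_pair_of_apply {R M : Type*} [Field R] [AddCommGroup M]
    [Module R M] {a b : M →ₗ[R] R} {v w : M} (hav : a v ≠ 0) (hbv : b v = 0) (hbw : b w ≠ 0) :
    LinearIndependent R ![a, b] := by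
  refine LinearIndependent.pair_iff.mpr fun r r' h => ?_
  have hr : r = 0 := by simpa [hbv, hav] using LinearMap.congr_fun h v
  subst hr
  simpa [hbw] using LinearMap.congr_fun h w

theorem Module.Basis.eq_smul_coord_two {R M : Type*} [CommRing R] [AddCommGroup M] [Module R M]
    (B : Module.Basis (Fin 3) R M) {a : M →ₗ[R] R} (h0 : a (B 0) = 0) (h1 : a (B 1) = 0) :
    a = a (B 2) • B.coord 2 :=
  B.ext fun i => by fin_cases i <;> simp [h0, h1]

theorem mul_pos_of_mul_pos_of_mul_pos {α : Type*} [CommRing α] [LinearOrder α]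
    [IsStrictOrderedRing α] {x y z : α} (hy : 0 < x * y) (hz : 0 < x * z) : 0 < y * z :=
  pos_of_mul_pos_right (by linear_combination mul_pos hy hz) (sq_nonneg x)

section

variable {K}

theorem NumberField.RingOfIntegers.coe_unit_eq_one_or_neg_one_of_mem_range (u : (𝓞 K)ˣ)
    (hu : ((u : 𝓞 K) : K) ∈ (algebraMap ℚ K).range) :
    ((u : 𝓞 K) : K) = 1 ∨ ((u : 𝓞 K) : K) = -1 := by
  obtain ⟨c, hc⟩ := hu
  have hint : ∀ r : ℚ, IsIntegral ℤ (algebraMap ℚ K r) → ∃ n : ℤ, (n : ℚ) = r := fun r hr =>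
    IsIntegrallyClosed.isIntegral_iff.mp
      ((isIntegral_algebraMap_iff (algebraMap ℚ K).injective).mp hr)
  obtain ⟨m, hm⟩ := hint c (hc ▸ isIntegral_coe (u : 𝓞 K))
  obtain ⟨n, hn⟩ := hint c⁻¹ (by
    rw [map_inv₀, hc, ← map_units_inv]
    exact isIntegral_coe _)
  have hmn : m * n = 1 := by
    have hc0 : c ≠ 0 := by
      rintro rfl
      exact u.ne_zero (coe_eq_zero_iff.mp ((map_zero _).symm.trans hc).symm)
    exact_mod_cast (show (m * n : ℚ) = 1 by rw [hm, hn, mul_inv_cancel₀ hc0])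
  rcases Int.eq_one_or_neg_one_of_mul_eq_one hmn with rfl | rfl
  · left; rw [← hc, ← hm]; simp
  · right; rw [← hc, ← hm]; simp

theorem NumberField.RingOfIntegers.coe_unit_notMem_range (σ : K →+* ℝ) (u : (𝓞 K)ˣ)
    (h1 : σ (u : 𝓞 K) ≠ 1) (hneg : σ (u : 𝓞 K) ≠ -1) :
    ((u : 𝓞 K) : K) ∉ (algebraMap ℚ K).range := fun h => by
  rcases coe_unit_eq_one_or_neg_one_of_mem_range u h with hu | hu <;> simp_all

theorem Admissible.ne_zero {𝔣 𝔟 𝔞 : Ideal (𝓞 K)} {q : ℕ} {lam : K}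
    (h : Admissible K 𝔣 𝔟 𝔞 q lam) : lam ≠ 0 := by
  rintro rfl
  exact h.2.2.2 (by simpa using (Lfrac K 𝔣 𝔟).zero_mem)

section Primitive

variable {L : FractionalIdeal (𝓞 K)⁰ K}

theorem IsPrimitiveOn.ne_zero {a : K →ₗ[ℚ] ℚ} (h : IsPrimitiveOn K L a) : a ≠ 0 := by
  rintro rfl
  obtain ⟨v, -, hv⟩ := h.2
  simp at hv

theorem IsPrimitiveOn.neg {a : K →ₗ[ℚ] ℚ} (h : IsPrimitiveOn K L a) :
    IsPrimitiveOn K L (-a) := by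
  refine ⟨fun v hv => ?_, ?_⟩
  · obtain ⟨n, hn⟩ := h.1 v hv
    exact ⟨-n, by simp [hn]⟩
  · obtain ⟨v, hv, hav⟩ := h.2
    exact ⟨-v, (L : Submodule (𝓞 K) K).neg_mem hv, by simp [hav]⟩

theorem IsPrimitiveOn.eq_or_eq_neg_of_smul {f : K →ₗ[ℚ] ℚ} {s t : ℚ}
    (hs : IsPrimitiveOn K L (s • f)) (ht : IsPrimitiveOn K L (t • f)) : t = s ∨ t = -s := by
  obtain ⟨w, hw, hsw⟩ := hs.2
  obtain ⟨v, hv, htv⟩ := ht.2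
  obtain ⟨n, hn⟩ := ht.1 w hw
  obtain ⟨k, hk⟩ := hs.1 v hv
  simp only [LinearMap.smul_apply, smul_eq_mul] at hsw htv hn hk
  have hnk : n * k = 1 := by
    exact_mod_cast (show (n * k : ℚ) = 1 by
      rw [← hn, ← hk]; linear_combination f w * s * htv + hsw)
  have hfw : f w ≠ 0 := right_ne_zero_of_mul_eq_one hsw
  rcases Int.eq_one_or_neg_one_of_mul_eq_one hnk with rfl | rfl
  · left; exact mul_right_cancel₀ hfw (by rw [hn, hsw]; simp)
  · right; exact mul_right_cancel₀ hfw (by rw [hn, neg_mul, hsw]; simp)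

/-- `f(L)` is a finitely generated subgroup of `ℚ`, hence cyclic (a fractional ideal of `ℤ`);
rescaling `f` by the inverse of a generator makes it primitive. -/
theorem exists_isPrimitiveOn_smul (f : K →ₗ[ℚ] ℚ) {v : K} (hv : v ∈ L) (hfv : f v ≠ 0) :
    ∃ c : ℚ, IsPrimitiveOn K L (c • f) := by
  set M : Submodule ℤ ℚ :=
    ((L : Submodule (𝓞 K) K).restrictScalars ℤ).map (f.restrictScalars ℤ)
  have hM : M.FG :=
    ((FractionalIdeal.fg_of_isNoetherianRing le_rfl L).restrictScalars (R := ℤ)).map _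
  obtain ⟨g, hg⟩ := (FractionalIdeal.isPrincipal
    (⟨M, FractionalIdeal.isFractional_of_fg hM⟩ : FractionalIdeal ℤ⁰ ℚ)).principal
  change M = ℤ ∙ g at hg
  have hmem : ∀ w ∈ L, ∃ n : ℤ, n • g = f w := fun w hw =>
    Submodule.mem_span_singleton.mp (hg ▸ Submodule.mem_map_of_mem hw)
  have hg0 : g ≠ 0 := by
    rintro rfl
    obtain ⟨n, hn⟩ := hmem v hv
    exact hfv (by simpa using hn.symm)
  obtain ⟨w, hw, hfw⟩ : ∃ w ∈ L, f w = g :=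
    Submodule.mem_map.mp (hg ▸ Submodule.mem_span_singleton_self g)
  refine ⟨g⁻¹, fun u hu => ?_, w, hw, by simp [hfw, hg0]⟩
  obtain ⟨n, hn⟩ := hmem u hu
  exact ⟨n, by rw [LinearMap.smul_apply, ← hn, zsmul_eq_mul, smul_eq_mul]; field_simp⟩

theorem exists_isPrimitiveOn_smul_mul_pos (f : K →ₗ[ℚ] ℚ) {v : K} (hv : v ∈ L)
    (hfv : f v ≠ 0) {r : ℝ} (hr : r ≠ 0) :
    ∃ s : ℚ, IsPrimitiveOn K L (s • f) ∧ 0 < (s : ℝ) * r := by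
  obtain ⟨c, hc⟩ := exists_isPrimitiveOn_smul f hv hfv
  have hc0 : (c : ℝ) ≠ 0 := Rat.cast_ne_zero.mpr fun h => hc.ne_zero (by simp [h])
  rcases lt_or_gt_of_ne (mul_ne_zero hc0 hr) with h | h
  · exact ⟨-c, by rw [neg_smul]; exact hc.neg, by push_cast; linarith⟩
  · exact ⟨c, hc, h⟩

theorem IsPrimitiveOn.eq_of_smul_of_mul_pos {f : K →ₗ[ℚ] ℚ} {s t : ℚ} {r : ℝ}
    (hs : IsPrimitiveOn K L (s • f)) (ht : IsPrimitiveOn K L (t • f)) (hsr : 0 < (s : ℝ) * r)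
    (htr : 0 < (t : ℝ) * r) : t = s := by
  refine (hs.eq_or_eq_neg_of_smul ht).resolve_right fun h => ?_
  rw [h, Rat.cast_neg, neg_mul] at htr
  linarith

end Primitive

section Orientation

variable (σR : K →+* ℝ) (σC : K →+* ℂ)

theorem det3_basis_ne_zero (hdeg : Module.finrank ℚ K = 3) (hσC : ∃ x : K, (σC x).im ≠ 0)
    (B : Module.Basis (Fin 3) ℚ K) : det3 K σR σC (B 0) (B 1) (B 2) ≠ 0 := by
  obtain ⟨x, hx⟩ := hσC
  let τ : Fin 3 → (K →ₐ[ℚ] ℂ) := ![(Complex.ofRealHom.comp σR).toRatAlgHom,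
    σC.toRatAlgHom, ((starRingEnd ℂ).comp σC).toRatAlgHom]
  have hτ : Function.Injective τ := by
    refine Function.Injective.of_comp (f := fun φ : K →ₐ[ℚ] ℂ => (φ x).im) ?_
    intro i j hij
    fin_cases i <;> fin_cases j <;> simp [τ] at hij ⊢ <;> grind
  have hbij : Function.Bijective τ :=
    (Fintype.bijective_iff_injective_and_card τ).mpr ⟨hτ, by simp [AlgHom.card, hdeg]⟩
  -- the columns `σC, conj ∘ σC` of the embeddings matrix become `re, im` at the cost of `-2i`
  have hdet : (Algebra.embeddingsMatrixReindex ℚ ℂ B (Equiv.ofBijective τ hbij)).det =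
      (det3 K σR σC (B 0) (B 1) (B 2) : ℂ) * (-2 * Complex.I) := by
    simp only [Algebra.embeddingsMatrixReindex, Matrix.det_fin_three, det3]
    apply Complex.ext <;> simp [τ, Complex.mul_re, Complex.mul_im] <;> ring
  intro h0
  apply Algebra.discr_not_zero_of_basis ℚ B
  have := Algebra.discr_eq_det_embeddingsMatrixReindex_pow_two ℚ ℂ B (Equiv.ofBijective τ hbij)
  rw [hdet, h0] at this
  simpa using this

theorem im_ne_zero_of_notMem_range (hp : (Module.finrank ℚ K).Prime)
    (hσC : ∃ x : K, (σC x).im ≠ 0) {x : K} (hx : x ∉ (algebraMap ℚ K).range) :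
    (σC x).im ≠ 0 := by
  intro h
  have hconj : σC.toRatAlgHom = ((starRingEnd ℂ).comp σC).toRatAlgHom :=
    algHom_ext_of_finrank_prime hp hx (Complex.ext (by simp) (by simp [h]))
  obtain ⟨y, hy⟩ := hσC
  have := congrArg Complex.im (AlgHom.congr_fun hconj y)
  simp only [RingHom.toRatAlgHom_apply, RingHom.coe_comp, Function.comp_apply,
    Complex.conj_im] at this
  exact hy (by linarith)

theorem im_map_mul_mul_conj_ne_zero (hp : (Module.finrank ℚ K).Prime)
    (hσC : ∃ x : K, (σC x).im ≠ 0) {x y : K} (hx : x ∉ (algebraMap ℚ K).range) (hy : y ≠ 0) :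
    (σC (x * y) * (starRingEnd ℂ) (σC y)).im ≠ 0 := by
  rw [map_mul, mul_assoc, Complex.mul_conj, Complex.im_mul_ofReal]
  exact mul_ne_zero (im_ne_zero_of_notMem_range σC hp hσC hx)
    (Complex.normSq_pos.mpr ((map_ne_zero σC).mpr hy)).ne'

variable (B : Module.Basis (Fin 3) ℚ K)

theorem det3_eq_of_repr_two_eq_zero {u v : K} (hu : B.repr u 2 = 0) (hv : B.repr v 2 = 0)
    (w : K) :
    det3 K σR σC u v w = ((B.repr u 0 * B.repr v 1 - B.repr u 1 * B.repr v 0) * B.repr w 2 : ℚ)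
      * det3 K σR σC (B 0) (B 1) (B 2) := by
  conv_lhs => rw [← B.sum_repr u, ← B.sum_repr v, ← B.sum_repr w]
  simp only [Fin.sum_univ_three, hu, hv, det3, Matrix.det_fin_three, Rat.smul_def, map_add,
    map_mul, map_ratCast, Complex.add_re, Complex.add_im, Complex.mul_re, Complex.mul_im,
    Complex.ratCast_re, Complex.ratCast_im]
  simp
  ring

theorem im_mul_conj_eq_of_repr_two_eq_zero (z : K →ₗ[ℚ] ℂ) {u v : K} (hu : B.repr u 2 = 0)
    (hv : B.repr v 2 = 0) :
    (z u * (starRingEnd ℂ) (z v)).im = ((B.repr u 0 * B.repr v 1 - B.repr u 1 * B.repr v 0 : ℚ)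
      : ℝ) * (z (B 0) * (starRingEnd ℂ) (z (B 1))).im := by
  conv_lhs => rw [← B.sum_repr u, ← B.sum_repr v]
  simp only [Fin.sum_univ_three, hu, hv, zero_smul, add_zero, map_add, map_smul]
  simp [Rat.smul_def, Complex.mul_im]
  ring

theorem pos_of_memU_smul_coord_two (z : K →ₗ[ℚ] ℂ) {s : ℚ} (hs : s ≠ 0)
    (h : memU K σR σC (s • B.coord 2) z) : 0 < (s : ℝ) *
      (det3 K σR σC (B 0) (B 1) (B 2) * (z (B 0) * (starRingEnd ℂ) (z (B 1))).im) := by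
  obtain ⟨p, q, hp, hq, -, hor, him⟩ := h
  have hker : ∀ u, (s • B.coord 2) u = 0 ↔ B.repr u 2 = 0 := by simp [hs]
  rw [hker] at hp hq
  -- `(p, q)` differs from `(B 0, B 1)` by a matrix of determinant `D`, which scales both forms
  have hδ := hor (s • B 2) (by simpa using mul_self_pos.mpr hs)
  rw [det3_eq_of_repr_two_eq_zero σR σC B hp hq] at hδ
  rw [im_mul_conj_eq_of_repr_two_eq_zero B z hp hq] at him
  set D : ℝ := ((B.repr p 0 * B.repr q 1 - B.repr p 1 * B.repr q 0 : ℚ) : ℝ)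
  have hsd : 0 < D * (s * det3 K σR σC (B 0) (B 1) (B 2)) := by simpa [D, mul_assoc] using hδ
  simpa only [mul_assoc] using mul_pos_of_mul_pos_of_mul_pos hsd him

theorem memU_smul_coord_two_of_pos (z : K →ₗ[ℚ] ℂ) {s : ℚ} (h : 0 < (s : ℝ) *
      (det3 K σR σC (B 0) (B 1) (B 2) * (z (B 0) * (starRingEnd ℂ) (z (B 1))).im)) :
    memU K σR σC (s • B.coord 2) z := by
  set d := det3 K σR σC (B 0) (B 1) (B 2)
  set m := (z (B 0) * (starRingEnd ℂ) (z (B 1))).im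
  rw [← mul_assoc] at h
  have hpos : ∀ δ, 0 < (s • B.coord 2) δ → (0 : ℝ) < s * B.repr δ 2 := fun δ hδ => by
    exact_mod_cast (by simpa using hδ : (0 : ℚ) < s * B.repr δ 2)
  have hdet : ∀ i j : Fin 3, i ≠ 2 → j ≠ 2 → ∀ δ, det3 K σR σC (B i) (B j) δ =
      ((B.repr (B i) 0 * B.repr (B j) 1 - B.repr (B i) 1 * B.repr (B j) 0 : ℚ) : ℝ) *
        B.repr δ 2 * d := fun i j hi hj δ => by
    rw [det3_eq_of_repr_two_eq_zero σR σC B (by simp [hi]) (by simp [hj])]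
    push_cast; ring
  rcases lt_or_gt_of_ne (right_ne_zero_of_mul (ne_of_gt h)) with hm | hm
  · have hsd : 0 < (s : ℝ) * -d := by linarith [neg_of_mul_pos_left h hm.le]
    have hD : ((B.repr (B 1) 0 * B.repr (B 0) 1 - B.repr (B 1) 1 * B.repr (B 0) 0 : ℚ) : ℝ)
        = -1 := by simp
    refine ⟨B 1, B 0, by simp, by simp, ?_, fun δ hδ => ?_, ?_⟩
    · convert B.linearIndependent.comp ![1, 0] (by decide) using 1
      ext i; fin_cases i <;> rfl
    · rw [hdet 1 0 (by decide) (by decide), hD]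
      linarith [mul_pos_of_mul_pos_of_mul_pos (hpos δ hδ) hsd]
    · rw [im_mul_conj_eq_of_repr_two_eq_zero B z (by simp) (by simp), hD]
      linarith
  · have hsd : 0 < (s : ℝ) * d := pos_of_mul_pos_left h hm.le
    have hD : ((B.repr (B 0) 0 * B.repr (B 1) 1 - B.repr (B 0) 1 * B.repr (B 1) 0 : ℚ) : ℝ)
        = 1 := by simp
    refine ⟨B 0, B 1, by simp, by simp, ?_, fun δ hδ => ?_, hm⟩
    · convert B.linearIndependent.comp ![0, 1] (by decide) using 1
      ext i; fin_cases i <;> rfl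
    · rw [hdet 0 1 (by decide) (by decide), hD, one_mul]
      exact mul_pos_of_mul_pos_of_mul_pos (hpos δ hδ) hsd

end Orientation

end

theorem exists_unique_a
    (hdeg : Module.finrank ℚ K = 3)
    (σR : K →+* ℝ) (σC : K →+* ℂ) (hσC : ∃ x : K, (σC x).im ≠ 0)
    (𝔣 𝔟 𝔞 : Ideal (𝓞 K))
    (q : ℕ)
    -- the unit ε : generator of O_𝔣^{+,×} = O_K^× ∩ (1+𝔣), with 0 < σ_ℝ(ε) < 1
    (ε : (𝓞 K)ˣ)
    (hεpos : 0 < σR (algebraMap (𝓞 K) K (ε : 𝓞 K)))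
    (hεlt : σR (algebraMap (𝓞 K) K (ε : 𝓞 K)) < 1)
    -- the admissible element
    (lam : K) (hlam : Admissible K 𝔣 𝔟 𝔞 q lam) :
    ∃! a : K →ₗ[ℚ] ℚ,
      IsPrimitiveOn K (Lfrac K 𝔣 𝔟) a ∧
      (a lam = 0 ∧ epsDual K ε a lam = 0 ∧
        LinearIndependent ℚ ![a, epsDual K ε a]) ∧
      memU K σR σC a (xlin K σC) := by
  set e : K := algebraMap (𝓞 K) K (ε : 𝓞 K)
  have hεa : ∀ (a : K →ₗ[ℚ] ℚ) v, epsDual K ε a v = a (e⁻¹ * v) := fun a v => by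
    rw [← map_units_inv]; rfl
  have he : e ∉ (algebraMap ℚ K).range :=
    NumberField.RingOfIntegers.coe_unit_notMem_range σR ε hεlt.ne (by linarith)
  have he_inv : e⁻¹ ∉ (algebraMap ℚ K).range := fun ⟨c, hc⟩ =>
    he ⟨c⁻¹, by rw [map_inv₀, hc, inv_inv]⟩
  obtain ⟨B, hB0, hB1, hB2⟩ := exists_basis_inv_mul_mul_of_finrank_eq_three hdeg he hlam.ne_zero
  have hB2L : B 2 ∈ Lfrac K 𝔣 𝔟 := by
    rw [hB2, ← Algebra.smul_def]
    exact (Lfrac K 𝔣 𝔟 : Submodule (𝓞 K) K).smul_mem (ε : 𝓞 K) hlam.1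
  have hdm : det3 K σR σC (B 0) (B 1) (B 2) *
      (xlin K σC (B 0) * (starRingEnd ℂ) (xlin K σC (B 1))).im ≠ 0 := by
    refine mul_ne_zero (det3_basis_ne_zero σR σC hdeg hσC B) ?_
    rw [hB0, hB1]
    exact im_map_mul_mul_conj_ne_zero σC (hdeg ▸ Nat.prime_three) hσC he_inv hlam.ne_zero
  obtain ⟨s, hs, hsign⟩ := exists_isPrimitiveOn_smul_mul_pos (B.coord 2) hB2L (by simp) hdm
  have hs0 : s ≠ 0 := fun h => hs.ne_zero (by simp [h])
  have he0 : e ≠ 0 := fun h => he ⟨0, by simp [h]⟩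
  refine ⟨s • B.coord 2, ⟨hs, ⟨by simp [← hB1], by simp [hεa, ← hB0], ?_⟩,
    memU_smul_coord_two_of_pos σR σC B _ hsign⟩, ?_⟩
  · refine LinearMap.linearIndependent_pair_of_apply (v := B 2) (w := e * B 2) (by simp [hs0])
      ?_ ?_
    · rw [hεa, hB2, inv_mul_cancel_left₀ he0, ← hB1]; simp
    · simp [hεa, he0, hs0]
  · rintro a ⟨ha, ⟨h1, h2, -⟩, hU⟩
    rw [B.eq_smul_coord_two (a := a) (by rwa [hB0, ← hεa]) (by rwa [hB1])] at ha hU ⊢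
    rw [hs.eq_of_smul_of_mul_pos ha hsign (pos_of_memU_smul_coord_two σR σC B _
      (fun h => ha.ne_zero (by simp [h])) hU)]
end
end

section
/- Assume in addition that 𝔞 is coprime to 𝔟. Then there exists an admissible element λ ∈ L; that is, there exists λ ∈ N(𝔞)𝔞⁻¹L with λ ≡ q mod qL and λ ∉ N(𝔞)L. -/
/-!
Write `p = N(𝔞)` and `M = 𝔞⁻¹L`. Then `L ⊊ M` (as `𝔞 ≠ 1` and `L` is invertible) and `pM ⊆ L`
(as `p ∈ 𝔞`). Minimality makes `q` divide `N(𝔣)`, so `p` and `q` are coprime because `𝔞` is coprime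
to `N(𝔣)`; write `up + vq = 1`. For `z ∈ M \ L` the element `μ = uq + vqz` lies in `M \ L`, and
`λ = pμ` is admissible since `λ - q = qv(pz - q)`.
-/

noncomputable section

open scoped NumberField nonZeroDivisors

variable (K : Type) [Field K] [NumberField K]

theorem Submodule.exists_mem_notMem_and_smul_sub_eq_smul {R V : Type*} [CommRing R]
    [AddCommGroup V] [Module R V] {L M : Submodule R V} (hLM : L ≤ M) (hML : ¬M ≤ L)
    {p q : R} (hpq : IsCoprime p q) (hpM : ∀ x ∈ M, p • x ∈ L) {w : V} (hw : w ∈ L) :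
    ∃ μ ∈ M, μ ∉ L ∧ ∃ ℓ ∈ L, p • μ - w = q • ℓ := by
  obtain ⟨z, hzM, hzL⟩ := SetLike.not_le_iff_exists.mp hML
  obtain ⟨u, v, huv⟩ := hpq
  refine ⟨u • w + (v * q) • z, add_mem (M.smul_mem u (hLM hw)) (M.smul_mem _ hzM), ?_,
    v • (p • z - w), L.smul_mem v (sub_mem (hpM z hzM) hw), ?_⟩
  · intro hμ
    have hvqz : (v * q) • z ∈ L := (L.add_mem_iff_right (L.smul_mem u hw)).mp hμ
    refine hzL ?_
    have hz : z = u • p • z + (v * q) • z := by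
      rw [smul_smul, ← add_smul, huv, one_smul]
    rw [hz]
    exact add_mem (L.smul_mem u (hpM z hzM)) hvqz
  · linear_combination (norm := module) huv • w

theorem Ideal.dvd_of_natCast_mem_of_forall_le {R : Type*} [CommRing R] {I : Ideal R} {q : ℕ}
    (hq0 : 0 < q) (hq : (q : R) ∈ I) (hmin : ∀ m : ℕ, 0 < m → (m : R) ∈ I → q ≤ m) {n : ℕ}
    (hn : (n : R) ∈ I) : q ∣ n := by
  have hmod : ((n % q : ℕ) : R) ∈ I := by
    have h : ((n % q + q * (n / q) : ℕ) : R) ∈ I := by rwa [Nat.mod_add_div]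
    push_cast at h
    exact (I.add_mem_iff_left (I.mul_mem_right _ hq)).mp h
  by_contra hqn
  exact (Nat.mod_lt n hq0).not_ge
    (hmin _ (Nat.pos_of_ne_zero (mt Nat.dvd_of_mod_eq_zero hqn)) hmod)

namespace FractionalIdeal

variable {A K : Type*} [CommRing A] [IsDedekindDomain A] [Field K] [Algebra A K]
  [IsFractionRing A K]

theorem one_le_inv_coeIdeal {𝔞 : Ideal A} (h𝔞 : 𝔞 ≠ ⊥) :
    1 ≤ (𝔞 : FractionalIdeal A⁰ K)⁻¹ := by
  simpa using
    inv_anti_mono (coeIdeal_ne_zero.mpr h𝔞) (one_ne_zero' (FractionalIdeal A⁰ K)) coeIdeal_le_one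

theorem le_inv_coeIdeal_mul {𝔞 : Ideal A} (h𝔞 : 𝔞 ≠ ⊥) (I : FractionalIdeal A⁰ K) :
    I ≤ (𝔞 : FractionalIdeal A⁰ K)⁻¹ * I := by
  simpa using mul_left_mono (a := I) (one_le_inv_coeIdeal (K := K) h𝔞)

theorem not_inv_coeIdeal_mul_le {𝔞 : Ideal A} (h𝔞bot : 𝔞 ≠ ⊥) (h𝔞top : 𝔞 ≠ ⊤)
    {I : FractionalIdeal A⁰ K} (hI : I ≠ 0) : ¬(𝔞 : FractionalIdeal A⁰ K)⁻¹ * I ≤ I := by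
  intro h
  refine not_inv_le_one_of_ne_bot (K := K) h𝔞bot h𝔞top ?_
  simpa [mul_assoc, mul_inv_cancel₀ hI] using mul_left_mono (a := I⁻¹) h

theorem algebraMap_mul_mem_of_mem_inv_coeIdeal_mul {𝔞 : Ideal A} {a : A} (ha : a ∈ 𝔞)
    {I : FractionalIdeal A⁰ K} {x : K} (hx : x ∈ (𝔞 : FractionalIdeal A⁰ K)⁻¹ * I) :
    algebraMap A K a * x ∈ I := by
  have ha𝔞 : spanSingleton A⁰ (algebraMap A K a) ≤ (𝔞 : FractionalIdeal A⁰ K) := by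
    rw [← coeIdeal_span_singleton, coeIdeal_le_coeIdeal, Ideal.span_singleton_le_iff_mem]
    exact ha
  have h𝔞inv : (𝔞 : FractionalIdeal A⁰ K) * (𝔞 : FractionalIdeal A⁰ K)⁻¹ ≤ 1 :=
    mul_one_div_le_one
  have hle : spanSingleton A⁰ (algebraMap A K a) * ((𝔞 : FractionalIdeal A⁰ K)⁻¹ * I) ≤ I := by
    simpa [mul_assoc] using mul_left_mono (a := I) ((mul_left_mono ha𝔞).trans h𝔞inv)
  exact hle (mem_singleton_mul.mpr ⟨x, hx, rfl⟩)

end FractionalIdeal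

theorem exists_admissible_of_coprime {𝔣 𝔟 𝔞 : Ideal (𝓞 K)} {q : ℕ} (h𝔟 : 𝔟 ≠ ⊥)
    (h𝔞bot : 𝔞 ≠ ⊥) (h𝔞top : 𝔞 ≠ ⊤) (hq0 : q ≠ 0) (hq𝔣 : (q : 𝓞 K) ∈ 𝔣)
    (hpq : (Ideal.absNorm 𝔞).Coprime q) : ∃ lam : K, Admissible K 𝔣 𝔟 𝔞 q lam := by
  set p := Ideal.absNorm 𝔞
  have hp : (p : K) ≠ 0 := Nat.cast_ne_zero.mpr (Ideal.absNorm_eq_zero_iff.not.mpr h𝔞bot)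
  have hqL : (q : K) ∈ Lfrac K 𝔣 𝔟 := by
    rw [Lfrac, mul_comm]
    exact FractionalIdeal.le_inv_coeIdeal_mul h𝔟 _
      ((FractionalIdeal.mem_coeIdeal _).mpr ⟨q, hq𝔣, map_natCast _ q⟩)
  have hL : Lfrac K 𝔣 𝔟 ≠ 0 := fun h => by simp [h, hq0] at hqL
  have hpM : ∀ x ∈ (aInvL K 𝔣 𝔟 𝔞 : Submodule (𝓞 K) K),
      (p : 𝓞 K) • x ∈ (Lfrac K 𝔣 𝔟 : Submodule (𝓞 K) K) := fun x hx => by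
    rw [Algebra.smul_def, map_natCast]
    exact FractionalIdeal.algebraMap_mul_mem_of_mem_inv_coeIdeal_mul
      (Ideal.absNorm_mem 𝔞) hx
  obtain ⟨μ, hμM, hμL, ℓ, hℓL, hμ⟩ := Submodule.exists_mem_notMem_and_smul_sub_eq_smul
    (FractionalIdeal.coe_le_coe.mpr (FractionalIdeal.le_inv_coeIdeal_mul h𝔞bot _))
    (mt FractionalIdeal.coe_le_coe.mp (FractionalIdeal.not_inv_coeIdeal_mul_le h𝔞bot h𝔞top hL))
    hpq.cast hpM hqL
  rw [Algebra.smul_def, Algebra.smul_def, map_natCast, map_natCast] at hμ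
  refine ⟨p * μ, ?_, ?_, ?_, ?_⟩
  · simpa [Algebra.smul_def] using hpM μ hμM
  · rwa [inv_mul_cancel_left₀ hp]
  · rwa [hμ, inv_mul_cancel_left₀ (Nat.cast_ne_zero.mpr hq0)]
  · rwa [inv_mul_cancel_left₀ hp]

theorem exists_admissible
    (𝔣 𝔟 𝔞 : Ideal (𝓞 K))
    (h𝔟bot : 𝔟 ≠ ⊥)
    (h𝔞N𝔣 : IsCoprime 𝔞 (Ideal.span {(Ideal.absNorm 𝔣 : 𝓞 K)}))
    (h𝔞prime : (Ideal.absNorm 𝔞).Prime)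
    (q : ℕ) (hq0 : 0 < q) (hq𝔣 : (q : 𝓞 K) ∈ 𝔣)
    (hqmin : ∀ m : ℕ, 0 < m → (m : 𝓞 K) ∈ 𝔣 → q ≤ m) :
    ∃ lam : K, Admissible K 𝔣 𝔟 𝔞 q lam := by
  have h𝔞bot : 𝔞 ≠ ⊥ := fun h => h𝔞prime.ne_zero (Ideal.absNorm_eq_zero_iff.mpr h)
  have h𝔞top : 𝔞 ≠ ⊤ := fun h => h𝔞prime.ne_one (Ideal.absNorm_eq_one_iff.mpr h)
  have hq : q ∣ Ideal.absNorm 𝔣 :=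
    Ideal.dvd_of_natCast_mem_of_forall_le hq0 hq𝔣 hqmin (Ideal.absNorm_mem 𝔣)
  have hpq : ¬Ideal.absNorm 𝔞 ∣ q := fun hpq => h𝔞top <| by
    have hN𝔣 : (Ideal.absNorm 𝔣 : 𝓞 K) ∈ 𝔞 :=
      Ideal.mem_of_dvd _ (Nat.cast_dvd_cast (hpq.trans hq)) (Ideal.absNorm_mem 𝔞)
    rw [← h𝔞N𝔣.sup_eq, sup_eq_left.mpr ((Ideal.span_singleton_le_iff_mem 𝔞).mpr hN𝔣)]
  exact exists_admissible_of_coprime K h𝔟bot h𝔞bot h𝔞top hq0.ne' hq𝔣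
    (h𝔞prime.coprime_iff_not_dvd.mpr hpq)
end
end

section
/- For every real s > 0 and all nonzero real numbers α, β, the double integral ∫₀^∞ ∫₀^∞ e^{−t₁⁻²t²α² − t₁t²β²} · t₁⁻¹ · t^{3s+1} (dt₁/t₁)(dt/t) converges absolutely and equals (1/6) · Γ((s+1)/2) · Γ(s) · |α|^{−(1+s)} · |β|^{−2s}. -/
/-!
Substituting `t₁ = y / t²` for fixed `t` turns the integrand into
`y⁻² e^{-β² y} · t^{3s+2} e^{-(α/y)² t⁶}`. Its integral in `t` is a Gamma integral,
`(1/6) Γ((s+1)/2) |α|^{-(1+s)} y^{s+1}`, which leaves `y^{s-1} e^{-β² y}`, a second Gamma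
integral producing `Γ(s) |β|^{-2s}`. The integrand is positive, so Tonelli gives absolute
convergence along the way.
-/

noncomputable section

open MeasureTheory Set Real

section Shear

variable {E : Type*} [NormedAddCommGroup E] [NormedSpace ℝ E] {β : Type*} [MeasurableSpace β]
  {ν : Measure β} [SFinite ν] {f : ℝ × β → E} {c : β → ℝ}

theorem integral_Ioi_smul_comp_mul_left (g : ℝ → E) {b : ℝ} (hb : 0 < b) :
    ∫ x in Ioi 0, b • g (b * x) = ∫ x in Ioi 0, g x := by
  rw [integral_smul, integral_comp_mul_left_Ioi' g 0 hb, mul_zero]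

theorem integrable_of_integrable_smul_comp_mul_fst (hc : ∀ᵐ t ∂ν, 0 < c t)
    (hf : AEStronglyMeasurable f ((volume.restrict (Ioi 0)).prod ν))
    (hg : Integrable (fun p => c p.2 • f (c p.2 * p.1, p.2)) ((volume.restrict (Ioi 0)).prod ν)) :
    Integrable f ((volume.restrict (Ioi 0)).prod ν) := by
  refine (integrable_prod_iff' hf).2 ⟨?_, hg.integral_norm_prod_right.congr ?_⟩
  · filter_upwards [hg.prod_left_ae, hc] with t hg_t hct
    have h := (integrableOn_Ioi_comp_mul_left_iff (fun x => f (x, t)) 0 hct).1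
      ((integrable_smul_iff hct.ne' _).1 hg_t)
    rwa [mul_zero] at h
  · filter_upwards [hc] with t hct
    simp_rw [norm_smul, norm_of_nonneg hct.le, ← smul_eq_mul]
    exact integral_Ioi_smul_comp_mul_left (fun x => ‖f (x, t)‖) hct

theorem integral_prod_smul_comp_mul_fst (hc : ∀ᵐ t ∂ν, 0 < c t)
    (hf : Integrable f ((volume.restrict (Ioi 0)).prod ν))
    (hg : Integrable (fun p => c p.2 • f (c p.2 * p.1, p.2)) ((volume.restrict (Ioi 0)).prod ν)) :
    ∫ p, f p ∂(volume.restrict (Ioi 0)).prod ν =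
      ∫ p, c p.2 • f (c p.2 * p.1, p.2) ∂(volume.restrict (Ioi 0)).prod ν := by
  rw [integral_prod_symm _ hf, integral_prod_symm _ hg]
  refine integral_congr_ae ?_
  filter_upwards [hc] with t hct
  exact (integral_Ioi_smul_comp_mul_left (fun x => f (x, t)) hct).symm

end Shear

theorem integrable_prod_of_nonneg {α β : Type*} [MeasurableSpace α] [MeasurableSpace β]
    {μ : Measure α} {ν : Measure β} [SFinite ν] {F : α × β → ℝ}
    (hF : AEStronglyMeasurable F (μ.prod ν)) (hF0 : ∀ᵐ x ∂μ, 0 ≤ᵐ[ν] fun y => F (x, y))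
    (hsec : ∀ᵐ x ∂μ, Integrable (fun y => F (x, y)) ν)
    (hint : Integrable (fun x => ∫ y, F (x, y) ∂ν) μ) : Integrable F (μ.prod ν) :=
  (integrable_prod_iff hF).2 ⟨hsec, hint.congr <| hF0.mono fun _ hx =>
    integral_congr_ae <| hx.mono fun _ hy => (norm_of_nonneg hy).symm⟩

theorem sq_rpow_eq_abs_rpow (x r : ℝ) : (x ^ 2) ^ r = |x| ^ (2 * r) := by
  rw [← sq_abs, ← rpow_natCast, ← rpow_mul (abs_nonneg x), Nat.cast_ofNat]

theorem integrableOn_rpow_mul_exp_neg_mul {a b : ℝ} (ha : 0 < a) (hb : 0 < b) :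
    IntegrableOn (fun x : ℝ => x ^ (a - 1) * exp (-b * x)) (Ioi 0) := by
  simpa using integrableOn_rpow_mul_exp_neg_mul_rpow (p := 1) (by linarith : -1 < a - 1) one_pos hb

theorem integral_rpow_mul_exp_neg_mul {a b : ℝ} (ha : 0 < a) (hb : 0 < b) :
    ∫ x in Ioi (0 : ℝ), x ^ (a - 1) * exp (-b * x) = b ^ (-a) * Gamma a := by
  simpa using integral_rpow_mul_exp_neg_mul_rpow (p := 1) one_pos (by linarith : -1 < a - 1) hb

def doubleGammaIntegrand (s α β : ℝ) (p : ℝ × ℝ) : ℝ :=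
  exp (-((p.1 ^ 2)⁻¹ * p.2 ^ 2 * α ^ 2) - p.1 * p.2 ^ 2 * β ^ 2) *
    p.1⁻¹ * p.2 ^ (3 * s + 1) / (p.1 * p.2)

@[fun_prop]
theorem measurable_doubleGammaIntegrand (s α β : ℝ) :
    Measurable (doubleGammaIntegrand s α β) := by
  unfold doubleGammaIntegrand
  fun_prop

theorem doubleGammaIntegrand_shear (s α β : ℝ) {y t : ℝ} (hy : 0 < y) (ht : 0 < t) :
    (t ^ 2)⁻¹ • doubleGammaIntegrand s α β ((t ^ 2)⁻¹ * y, t) =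
      (y ^ 2)⁻¹ * exp (-β ^ 2 * y) * (t ^ (3 * s + 2) * exp (-(α ^ 2 / y ^ 2) * t ^ (6 : ℝ))) := by
  have hexp : -((((t ^ 2)⁻¹ * y) ^ 2)⁻¹ * t ^ 2 * α ^ 2) - (t ^ 2)⁻¹ * y * t ^ 2 * β ^ 2 =
      -β ^ 2 * y + -(α ^ 2 / y ^ 2) * t ^ (6 : ℝ) := by
    rw [show (6 : ℝ) = (6 : ℕ) by norm_num, rpow_natCast]
    field_simp
    ring
  rw [doubleGammaIntegrand, hexp, exp_add, smul_eq_mul]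
  simp only [rpow_add ht, rpow_two, rpow_one]
  field_simp

theorem integral_sheared_section (s α : ℝ) (hs : 0 < s) (hα : α ≠ 0) {y : ℝ} (hy : 0 < y) :
    ∫ t in Ioi (0 : ℝ), t ^ (3 * s + 2) * exp (-(α ^ 2 / y ^ 2) * t ^ (6 : ℝ)) =
      1 / 6 * Gamma ((s + 1) / 2) * |α| ^ (-(1 + s)) * y ^ (s + 1) := by
  rw [integral_rpow_mul_exp_neg_mul_rpow (by norm_num) (by linarith) (by positivity),
    div_rpow (sq_nonneg α) (sq_nonneg y), sq_rpow_eq_abs_rpow, sq_rpow_eq_abs_rpow, abs_of_pos hy,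
    show (3 * s + 2 + 1) / 6 = (s + 1) / 2 by ring,
    show 2 * (-(3 * s + 2 + 1) / 6) = -(1 + s) by ring, rpow_neg hy.le, add_comm 1 s]
  field_simp

theorem integrable_and_integral_sheared_doubleGammaIntegrand {s α β : ℝ} (hs : 0 < s)
    (hα : α ≠ 0) (hβ : β ≠ 0) :
    Integrable (fun p : ℝ × ℝ => (p.2 ^ 2)⁻¹ • doubleGammaIntegrand s α β ((p.2 ^ 2)⁻¹ * p.1, p.2))
        ((volume.restrict (Ioi 0)).prod (volume.restrict (Ioi 0))) ∧
      ∫ p, (p.2 ^ 2)⁻¹ • doubleGammaIntegrand s α β ((p.2 ^ 2)⁻¹ * p.1, p.2)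
          ∂(volume.restrict (Ioi 0)).prod (volume.restrict (Ioi 0)) =
        1 / 6 * Gamma ((s + 1) / 2) * Gamma s * |α| ^ (-(1 + s)) * |β| ^ (-(2 * s)) := by
  set G := fun p : ℝ × ℝ => (p.2 ^ 2)⁻¹ • doubleGammaIntegrand s α β ((p.2 ^ 2)⁻¹ * p.1, p.2)
  set C := 1 / 6 * Gamma ((s + 1) / 2) * |α| ^ (-(1 + s)) with hC
  have hG {y t : ℝ} (hy : 0 < y) (ht : 0 < t) : G (y, t) =
      (y ^ 2)⁻¹ * exp (-β ^ 2 * y) * (t ^ (3 * s + 2) * exp (-(α ^ 2 / y ^ 2) * t ^ (6 : ℝ))) :=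
    doubleGammaIntegrand_shear s α β hy ht
  have hsec_int (y : ℝ) (hy : 0 < y) : IntegrableOn (fun t => G (y, t)) (Ioi 0) :=
    IntegrableOn.congr_fun ((integrableOn_rpow_mul_exp_neg_mul_rpow (p := 6) (by linarith)
      (by norm_num) (by positivity)).const_mul _) (fun _ ht => (hG hy ht).symm) measurableSet_Ioi
  have hsec (y : ℝ) (hy : 0 < y) :
      ∫ t in Ioi 0, G (y, t) = C * (y ^ (s - 1) * exp (-β ^ 2 * y)) := by
    have hpow : y ^ (s + 1) = y ^ (s - 1) * y ^ 2 := by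
      rw [← rpow_two, ← rpow_add hy]
      ring_nf
    rw [setIntegral_congr_fun measurableSet_Ioi (fun _ ht => hG hy ht), integral_const_mul,
      integral_sheared_section s α hs hα hy, hpow, hC]
    field_simp
  have hGint : Integrable G ((volume.restrict (Ioi 0)).prod (volume.restrict (Ioi 0))) := by
    refine integrable_prod_of_nonneg (by fun_prop) ?_
      ((ae_restrict_mem measurableSet_Ioi).mono hsec_int)
      (IntegrableOn.congr_fun ((integrableOn_rpow_mul_exp_neg_mul hs (by positivity)).const_mul C)
        (fun y hy => (hsec y hy).symm) measurableSet_Ioi)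
    filter_upwards [ae_restrict_mem measurableSet_Ioi] with y (hy : 0 < y)
    filter_upwards [ae_restrict_mem measurableSet_Ioi] with t (ht : 0 < t)
    rw [Pi.zero_apply, hG hy ht]
    positivity
  refine ⟨hGint, ?_⟩
  rw [integral_prod _ hGint, setIntegral_congr_fun measurableSet_Ioi hsec, integral_const_mul,
    integral_rpow_mul_exp_neg_mul hs (by positivity), sq_rpow_eq_abs_rpow, hC]
  ring_nf

/-- For `s > 0` and nonzero reals `α, β`, the double integral
`∫₀^∞ ∫₀^∞ e^{−t₁⁻²t²α² − t₁t²β²} t₁⁻¹ t^{3s+1} (dt₁/t₁)(dt/t)` converges absolutely and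
equals `(1/6) Γ((s+1)/2) Γ(s) |α|^{−(1+s)} |β|^{−2s}`. -/
theorem double_integral_gamma (s α β : ℝ) (hs : 0 < s) (hα : α ≠ 0) (hβ : β ≠ 0) :
    IntegrableOn
      (fun p : ℝ × ℝ =>
        Real.exp (-((p.1 ^ 2)⁻¹ * p.2 ^ 2 * α ^ 2) - p.1 * p.2 ^ 2 * β ^ 2) *
          p.1⁻¹ * p.2 ^ (3 * s + 1) / (p.1 * p.2))
      (Ioi (0 : ℝ) ×ˢ Ioi (0 : ℝ)) volume ∧
    (∫ p in Ioi (0 : ℝ) ×ˢ Ioi (0 : ℝ),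
        Real.exp (-((p.1 ^ 2)⁻¹ * p.2 ^ 2 * α ^ 2) - p.1 * p.2 ^ 2 * β ^ 2) *
          p.1⁻¹ * p.2 ^ (3 * s + 1) / (p.1 * p.2)) =
      (1 / 6) * Real.Gamma ((s + 1) / 2) * Real.Gamma s *
        |α| ^ (-(1 + s)) * |β| ^ (-(2 * s)) := by
  change IntegrableOn (doubleGammaIntegrand s α β) _ _ ∧
    ∫ p in _, doubleGammaIntegrand s α β p = _
  rw [IntegrableOn, Measure.volume_eq_prod, ← Measure.prod_restrict]
  have hc : ∀ᵐ t ∂volume.restrict (Ioi (0 : ℝ)), 0 < (t ^ 2)⁻¹ := by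
    filter_upwards [ae_restrict_mem measurableSet_Ioi] with t (ht : 0 < t)
    positivity
  obtain ⟨hG, hG_eq⟩ := integrable_and_integral_sheared_doubleGammaIntegrand hs hα hβ
  have hF := integrable_of_integrable_smul_comp_mul_fst hc
    (measurable_doubleGammaIntegrand s α β).aestronglyMeasurable hG
  exact ⟨hF, (integral_prod_smul_comp_mul_fst hc hF hG).trans hG_eq⟩
end
end

section
/- There exist constants A > 0 and T ≥ 1 such that |ψ⁰(v)_{a,t₁} − ψ⁰(v)_{ε_ℝ b,t₁}| < A · t₁^{−3/2} · e^{−H_{a,t₁}(v)/2} for every v ∈ K⊗ℝ and every t₁ ≥ T. -/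
noncomputable section

open scoped NumberField nonZeroDivisors

variable (K : Type) [Field K] [NumberField K]

/-- The metric `H_{f,t₁}(v) = t₁⁻² f(v)² + t₁ |σ_ℂ(v)|²` on `K ⊗ ℝ ≅ ℝ × ℂ`, for a
linear functional `f` (e.g. `f = a` or `f = ε_ℝ b`). -/
def Hq (f : (ℝ × ℂ) →ₗ[ℝ] ℝ) (t₁ : ℝ) (v : ℝ × ℂ) : ℝ :=
  (t₁ ^ 2)⁻¹ * f v ^ 2 + t₁ * ‖v.2‖ ^ 2

/-- The Schwartz function `ψ⁰(v)_{f,t₁} = −t₁⁻¹ f(v) e^{−H_{f,t₁}(v)}`. -/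
def psi0 (f : (ℝ × ℂ) →ₗ[ℝ] ℝ) (t₁ : ℝ) (v : ℝ × ℂ) : ℝ :=
  -(t₁⁻¹ * f v * Real.exp (-Hq f t₁ v))

/-!
Write `g(y) = y e^{-y²}`, `u = t⁻¹ a(v)`, `w = t⁻¹ ε_ℝ b(v)` and `s = t |σ_ℂ(v)|²`, so that the
difference of the two Schwartz functions is `(g(w) - g(u)) e^{-s}`. Since `ε_ℝ b(x, 0) = a(x, 0)`,
the functional `a - ε_ℝ b` only sees the complex coordinate, whence `|w - u| ≤ C t⁻¹ |σ_ℂ(v)|`,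
which is `C t^{-3/2} √s`. The mean value theorem for `g`, with `|g'(x)| ≤ 9 e^{-3x²/4}`, then gives
the bound, the factor `√s` being absorbed by `e^{-s/2}` once `t³ ≥ 6 C²`.
-/

open Real

lemma sqrt_le_exp_div_four {s : ℝ} (hs : 0 ≤ s) : √s ≤ exp (s / 4) := by
  rw [sqrt_le_left (exp_pos _).le]
  calc s ≤ (s / 4 + 1) ^ 2 := by nlinarith [sq_nonneg (s / 4 - 1)]
    _ ≤ exp (s / 4) ^ 2 := by gcongr; exact add_one_le_exp _

lemma abs_one_sub_two_mul_sq_mul_exp_neg_sq_le (x : ℝ) :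
    |1 - 2 * x ^ 2| * exp (-x ^ 2) ≤ 9 * exp (-(3 / 4) * x ^ 2) := by
  have h : |1 - 2 * x ^ 2| ≤ 9 * exp (x ^ 2 / 4) := by
    have := add_one_le_exp (x ^ 2 / 4)
    rw [abs_le]
    constructor <;> nlinarith [sq_nonneg x]
  calc |1 - 2 * x ^ 2| * exp (-x ^ 2) ≤ 9 * exp (x ^ 2 / 4) * exp (-x ^ 2) := by gcongr
    _ = 9 * exp (-(3 / 4) * x ^ 2) := by rw [mul_assoc, ← exp_add]; ring_nf

lemma hasDerivAt_mul_exp_neg_sq (x : ℝ) :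
    HasDerivAt (fun y ↦ y * exp (-y ^ 2)) ((1 - 2 * x ^ 2) * exp (-x ^ 2)) x := by
  refine ((hasDerivAt_id' x).fun_mul (hasDerivAt_pow 2 x).fun_neg.exp).congr_deriv ?_
  push_cast
  ring

lemma abs_mul_exp_neg_sq_sub_le (u w : ℝ) :
    |w * exp (-w ^ 2) - u * exp (-u ^ 2)| ≤
      9 * exp (-u ^ 2 / 2 + 3 * (w - u) ^ 2 / 2) * |w - u| := by
  have hbound : ∀ x ∈ Set.uIcc u w,
      ‖(1 - 2 * x ^ 2) * exp (-x ^ 2)‖ ≤ 9 * exp (-u ^ 2 / 2 + 3 * (w - u) ^ 2 / 2) := by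
    intro x hx
    have hxu : (x - u) ^ 2 ≤ (w - u) ^ 2 := sq_le_sq.mpr (Set.abs_sub_left_of_mem_uIcc hx)
    -- `u² ≤ (3/2) x² + 3 (x - u)²`
    have hexp : -(3 / 4) * x ^ 2 ≤ -u ^ 2 / 2 + 3 * (w - u) ^ 2 / 2 := by
      nlinarith [sq_nonneg (x / 2 - (u - x))]
    rw [norm_mul, Real.norm_eq_abs, Real.norm_of_nonneg (exp_pos _).le]
    exact (abs_one_sub_two_mul_sq_mul_exp_neg_sq_le x).trans (by gcongr)
  simpa [Real.norm_eq_abs] using Convex.norm_image_sub_le_of_norm_hasDerivWithin_le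
    (fun x _ ↦ (hasDerivAt_mul_exp_neg_sq x).hasDerivWithinAt) hbound (convex_uIcc u w)
    Set.left_mem_uIcc Set.right_mem_uIcc

lemma abs_mul_exp_neg_sq_sub_mul_exp_le {u w s K : ℝ} (hs : 0 ≤ s) (hK : 0 ≤ K)
    (hK6 : 6 * K ^ 2 ≤ 1) (hwu : |w - u| ≤ K * √s) :
    |(w * exp (-w ^ 2) - u * exp (-u ^ 2)) * exp (-s)| ≤ 9 * K * exp (-(u ^ 2 + s) / 2) := by
  have hsq : 3 * (w - u) ^ 2 / 2 ≤ s / 4 := by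
    have : (w - u) ^ 2 ≤ K ^ 2 * s := by
      rw [← sq_abs, ← sq_sqrt hs, ← mul_pow]
      exact pow_le_pow_left₀ (abs_nonneg _) hwu 2
    nlinarith
  have hwu' : |w - u| ≤ K * exp (s / 4) := hwu.trans (by gcongr; exact sqrt_le_exp_div_four hs)
  calc |(w * exp (-w ^ 2) - u * exp (-u ^ 2)) * exp (-s)|
      = |w * exp (-w ^ 2) - u * exp (-u ^ 2)| * exp (-s) := by
        rw [abs_mul, abs_of_pos (exp_pos _)]
    _ ≤ 9 * exp (-u ^ 2 / 2 + 3 * (w - u) ^ 2 / 2) * |w - u| * exp (-s) := by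
        gcongr; exact abs_mul_exp_neg_sq_sub_le u w
    _ ≤ 9 * exp (-u ^ 2 / 2 + s / 4) * (K * exp (s / 4)) * exp (-s) := by gcongr
    _ = 9 * K * exp (-(u ^ 2 + s) / 2) := by
        rw [show -(u ^ 2 + s) / 2 = (-u ^ 2 / 2 + s / 4) + s / 4 + -s by ring]
        simp only [exp_add]
        ring

lemma exists_abs_sub_le_mul_norm_snd {E F : Type*} [AddCommGroup E] [Module ℝ E]
    [NormedAddCommGroup F] [NormedSpace ℝ F] [FiniteDimensional ℝ F] (f g : E × F →ₗ[ℝ] ℝ)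
    (hfg : ∀ x, f (x, 0) = g (x, 0)) : ∃ C, 0 ≤ C ∧ ∀ v, |f v - g v| ≤ C * ‖v.2‖ := by
  set φ := ((f - g) ∘ₗ LinearMap.inr ℝ E F).toContinuousLinearMap
  refine ⟨‖φ‖, norm_nonneg _, fun v ↦ ?_⟩
  have hφ : f v - g v = φ v.2 := by
    have hv : v = (v.1, 0) + (0, v.2) := by simp
    conv_lhs => rw [hv, map_add, map_add, hfg]
    simp [φ]
  rw [hφ, ← Real.norm_eq_abs]
  exact φ.le_opNorm v.2

lemma apply_inl_eq_smul_apply_inl {f g : ℝ × ℂ →ₗ[ℝ] ℝ} {e e' : ℝ} {c : ℂ} (hee : e * e' = 1)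
    (hg : ∀ v : ℝ × ℂ, g v = f (e' * v.1, c * v.2)) (x : ℝ) : f (x, 0) = (e • g) (x, 0) := by
  have : ((e' * x, c * 0) : ℝ × ℂ) = e' • (x, 0) := by simp
  rw [LinearMap.smul_apply, hg, this, map_smul, smul_eq_mul, smul_eq_mul, ← mul_assoc, hee, one_mul]

lemma Hq_eq (f : (ℝ × ℂ) →ₗ[ℝ] ℝ) (t : ℝ) (v : ℝ × ℂ) :
    Hq f t v = (t⁻¹ * f v) ^ 2 + t * ‖v.2‖ ^ 2 := by
  rw [Hq]; ring

lemma psi0_eq (f : (ℝ × ℂ) →ₗ[ℝ] ℝ) (t : ℝ) (v : ℝ × ℂ) :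
    psi0 f t v = -((t⁻¹ * f v) * exp (-(t⁻¹ * f v) ^ 2) * exp (-(t * ‖v.2‖ ^ 2))) := by
  rw [psi0, Hq_eq, neg_add, exp_add]
  ring

lemma rpow_neg_three_halves {t : ℝ} (ht : 0 ≤ t) : t ^ (-(3 / 2) : ℝ) = (√t ^ 3)⁻¹ := by
  rw [sqrt_eq_rpow, ← rpow_natCast, ← rpow_mul ht, rpow_neg ht]
  norm_num

lemma abs_psi0_sub_psi0_le {f g : (ℝ × ℂ) →ₗ[ℝ] ℝ} {C t : ℝ} (hC : 0 ≤ C) (ht : 0 < t)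
    (htC : 6 * C ^ 2 ≤ t ^ 3) (hfg : ∀ v, |f v - g v| ≤ C * ‖v.2‖) (v : ℝ × ℂ) :
    |psi0 f t v - psi0 g t v| ≤ 9 * C * t ^ (-(3 / 2) : ℝ) * exp (-(Hq f t v) / 2) := by
  have hr : 0 < √t := sqrt_pos.mpr ht
  have hrt : √t ^ 2 = t := sq_sqrt ht.le
  have hK6 : 6 * (C * (√t ^ 3)⁻¹) ^ 2 ≤ 1 := by
    rw [mul_pow, inv_pow, ← pow_mul, pow_mul', hrt, ← div_eq_mul_inv, mul_div_assoc',
      div_le_one (by positivity)]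
    exact htC
  have hwu : |t⁻¹ * g v - t⁻¹ * f v| ≤ C * (√t ^ 3)⁻¹ * √(t * ‖v.2‖ ^ 2) := by
    rw [← mul_sub, abs_mul, abs_sub_comm, abs_of_pos (inv_pos.mpr ht), sqrt_mul ht.le,
      sqrt_sq (norm_nonneg _)]
    calc t⁻¹ * |f v - g v| ≤ t⁻¹ * (C * ‖v.2‖) := by gcongr; exact hfg v
      _ = C * (√t ^ 3)⁻¹ * (√t * ‖v.2‖) := by rw [pow_succ, hrt]; field_simp
  rw [rpow_neg_three_halves ht.le, Hq_eq, psi0_eq, psi0_eq, mul_assoc 9 C]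
  convert abs_mul_exp_neg_sq_sub_mul_exp_le (by positivity) (by positivity) hK6 hwu using 2
  ring

theorem psi0_comparison
    (σR : K →+* ℝ) (σC : K →+* ℂ)
    (ε : (𝓞 K)ˣ)
    -- the ℝ-linear extensions of a and b to K ⊗ ℝ ≅ ℝ × ℂ
    (aR bR : (ℝ × ℂ) →ₗ[ℝ] ℝ)
    (hbR : ∀ v : ℝ × ℂ,
      bR v = aR (σR (algebraMap (𝓞 K) K ((ε⁻¹ : (𝓞 K)ˣ) : 𝓞 K)) * v.1,
                 σC (algebraMap (𝓞 K) K ((ε⁻¹ : (𝓞 K)ˣ) : 𝓞 K)) * v.2)) :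
    ∃ A : ℝ, 0 < A ∧ ∃ T : ℝ, 1 ≤ T ∧ ∀ v : ℝ × ℂ, ∀ t₁ : ℝ, T ≤ t₁ →
      |psi0 aR t₁ v - psi0 (σR (algebraMap (𝓞 K) K (ε : 𝓞 K)) • bR) t₁ v| <
        A * t₁ ^ (-(3 / 2) : ℝ) * Real.exp (-(Hq aR t₁ v) / 2) := by
  have hεε : σR (algebraMap (𝓞 K) K (ε : 𝓞 K)) *
      σR (algebraMap (𝓞 K) K ((ε⁻¹ : (𝓞 K)ˣ) : 𝓞 K)) = 1 := by
    rw [← map_mul, ← map_mul, Units.mul_inv, map_one, map_one]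
  obtain ⟨C, hC, hCbound⟩ :=
    exists_abs_sub_le_mul_norm_snd _ _ (apply_inl_eq_smul_apply_inl hεε hbR)
  refine ⟨9 * C + 1, by positivity, 1 + 6 * C ^ 2, by nlinarith, fun v t ht ↦ ?_⟩
  have ht1 : 1 ≤ t := by nlinarith
  have htC : 6 * C ^ 2 ≤ t ^ 3 := by nlinarith [le_self_pow₀ ht1 (show 3 ≠ 0 by norm_num)]
  calc _ ≤ 9 * C * t ^ (-(3 / 2) : ℝ) * exp (-(Hq aR t v) / 2) :=
        abs_psi0_sub_psi0_le hC (by linarith) htC hCbound v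
    _ < _ := by gcongr; linarith
end
end
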